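/- arXiv:1702.00446 — 4 statements merged into one kernel-verified Lean document; each statement's English description precedes it below -/
import Mathlib

section
/- The commutator subgroup of the free group F_2 = F(g_1, g_2) on two generators is a free group, freely generated by the family of commutators (g_2^{n}, g_1^{k}) = g_2^{-n} g_1^{-k} g_2^{n} g_1^{k}, indexed by all pairs (n, k) of nonzero integers. -/
/-- The commutator `(g, h) = g⁻¹h⁻¹gh` (the convention of the paper). -/
def pcomm {G : Type*} [Group G] (g h : G) : G := g⁻¹ * h⁻¹ * g * h

/-- The family of commutators `(g₂ⁿ, g₁ᵏ)`, indexed by pairs `(n, k)` of nonzero integers,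
as elements of the free group on two generators. -/
def basisFamilyF2 (p : {p : ℤ × ℤ // p.1 ≠ 0 ∧ p.2 ≠ 0}) : FreeGroup (Fin 2) :=
  pcomm (FreeGroup.of (1 : Fin 2) ^ p.1.1) (FreeGroup.of (0 : Fin 2) ^ p.1.2)

/-!
Injectivity is a ping-pong argument for the action of `F₂ ≅ ℤ * ℤ` on reduced words: for
nontrivial `a`, `b` in distinct free factors, `(a, b) = a⁻¹b⁻¹ab` sends every reduced word not
beginning with `b⁻¹a⁻¹` to one beginning with `a⁻¹b⁻¹`, and its inverse `(b, a)` does the same with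
the roles of `a` and `b` exchanged.

For the range: conjugating `(xⁿ, yᵏ)` by a power of `x` or of `y` gives a product of two
commutators of the same shape, so these commutators generate a normal subgroup. Modulo it the
generators `x` and `y` commute, so the quotient is abelian, i.e. the subgroup contains the
commutator subgroup.
-/

open scoped commutatorElement

lemma pcomm_inv {G : Type*} [Group G] (g h : G) : (pcomm g h)⁻¹ = pcomm h g := by
  simp only [pcomm, mul_inv_rev, inv_inv, mul_assoc]

lemma pcomm_eq_commutatorElement {G : Type*} [Group G] (g h : G) : pcomm g h = ⁅g⁻¹, h⁻¹⁆ := by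
  simp only [pcomm, commutatorElement_def, inv_inv]

namespace Monoid.CoprodI.Word

variable {ι : Type*} [DecidableEq ι]

theorem toList_of_smul_of_fstIdx_ne {M : ι → Type*} [∀ i, Monoid (M i)]
    [∀ i, DecidableEq (M i)] {i : ι} {m : M i} {w : Word M} (hw : w.fstIdx ≠ some i)
    (hm : m ≠ 1) : (of m • w).toList = ⟨i, m⟩ :: w.toList := by
  rw [← cons_eq_smul (h1 := hw) (h2 := hm), cons_toList]

theorem fstIdx_of_smul_of_fstIdx_ne {M : ι → Type*} [∀ i, Monoid (M i)]
    [∀ i, DecidableEq (M i)] {i : ι} {m : M i} {w : Word M} (hw : w.fstIdx ≠ some i)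
    (hm : m ≠ 1) : (of m • w).fstIdx = some i := by
  simp [fstIdx, toList_of_smul_of_fstIdx_ne hw hm]

variable {G : ι → Type*} [∀ i, Group (G i)] [∀ i, DecidableEq (G i)]

theorem fstIdx_of_smul_eq_some_or_toList_eq_cons_inv {i : ι} {m : G i} (hm : m ≠ 1)
    (w : Word G) :
    (of m • w).fstIdx = some i ∨ w.toList = ⟨i, m⁻¹⟩ :: (of m • w).toList := by
  set p := equivPair i w
  have hw : of m • w = of (m * p.head) • p.tail := by
    rw [map_mul, mul_smul, equivPair_head_smul_equivPair_tail]
  by_cases hcancel : m * p.head = 1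
  · right
    have hhead : p.head = m⁻¹ := eq_inv_of_mul_eq_one_right hcancel
    rw [hw, hcancel, map_one, one_smul]
    conv_lhs => rw [← equivPair_head_smul_equivPair_tail (i := i) w]
    rw [← toList_of_smul_of_fstIdx_ne p.fstIdx_ne (inv_ne_one.2 hm), ← hhead]
  · left
    rw [hw]
    exact fstIdx_of_smul_of_fstIdx_ne p.fstIdx_ne hcancel

theorem pair_prefix_toList_pcomm_smul {i j : ι} (hij : i ≠ j) {a : G i} {b : G j}
    (ha : a ≠ 1) (hb : b ≠ 1) {w : Word G}
    (hw : ¬ [⟨j, b⁻¹⟩, ⟨i, a⁻¹⟩] <+: w.toList) :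
    [⟨i, a⁻¹⟩, ⟨j, b⁻¹⟩] <+: (pcomm (of a) (of b) • w).toList := by
  suffices h : ∀ v : Word G, v.fstIdx = some i →
      [⟨i, a⁻¹⟩, ⟨j, b⁻¹⟩] <+: (of a⁻¹ • of b⁻¹ • v).toList by
    simp only [pcomm, ← map_inv, mul_smul]
    rcases fstIdx_of_smul_eq_some_or_toList_eq_cons_inv hb w with hj | hwb
    · exact h _ (fstIdx_of_smul_of_fstIdx_ne (by simp [hj, hij.symm]) ha)
    rcases fstIdx_of_smul_eq_some_or_toList_eq_cons_inv ha (of b • w) with hi | hwa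
    · exact h _ hi
    · exact absurd ⟨_, by rw [hwb, hwa]; rfl⟩ hw
  intro v hv
  have hv' : (of b⁻¹ • v).fstIdx = some j :=
    fstIdx_of_smul_of_fstIdx_ne (by simp [hv, hij]) (inv_ne_one.2 hb)
  rw [toList_of_smul_of_fstIdx_ne (by rw [hv']; simpa using hij.symm) (inv_ne_one.2 ha),
    toList_of_smul_of_fstIdx_ne (by simp [hv, hij]) (inv_ne_one.2 hb)]
  exact ⟨_, rfl⟩

end Monoid.CoprodI.Word

namespace Monoid.CoprodI

open Word

universe u

variable {ι : Type u} [DecidableEq ι] {G : ι → Type u} [∀ i, Group (G i)]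
  [∀ i, DecidableEq (G i)]

theorem injective_lift_pcomm_of {κ : Type u} [Nontrivial κ] {i j : ι} (hij : i ≠ j)
    (a : κ → G i) (b : κ → G j) (ha : ∀ p, a p ≠ 1) (hb : ∀ p, b p ≠ 1)
    (hab : Function.Injective fun p => (a p, b p)) :
    Function.Injective (FreeGroup.lift fun p => pcomm (of (a p)) (of (b p))) := by
  let X : κ → Set (Word G) := fun p => {w | [⟨i, (a p)⁻¹⟩, ⟨j, (b p)⁻¹⟩] <+: w.toList}
  let Y : κ → Set (Word G) := fun p => {w | [⟨j, (b p)⁻¹⟩, ⟨i, (a p)⁻¹⟩] <+: w.toList}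
  have prefix_eq {x y x' y' : Σ i, G i} {l : List (Σ i, G i)} (h : [x, y] <+: l)
      (h' : [x', y'] <+: l) : x = x' ∧ y = y' := by
    rw [List.prefix_iff_eq_take] at h h'
    simpa using h.trans h'.symm
  refine FreeGroup.injective_lift_of_ping_pong (G := CoprodI G) _ X Y
    (fun p => ⟨_, pair_prefix_toList_pcomm_smul (w := empty) hij (ha p) (hb p) (by simp [empty])⟩)
    ?_ ?_ ?_ ?_ ?_
  · intro p q hpq
    refine Set.disjoint_left.2 fun w hp hq => hpq (hab ?_)
    obtain ⟨h1, h2⟩ := prefix_eq hp hq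
    simp_all
  · intro p q hpq
    refine Set.disjoint_left.2 fun w hp hq => hpq (hab ?_)
    obtain ⟨h1, h2⟩ := prefix_eq hp hq
    simp_all
  · exact fun p q => Set.disjoint_left.2 fun w hp hq =>
      hij (congrArg Sigma.fst (prefix_eq hp hq).1)
  · rintro p _ ⟨w, hw, rfl⟩
    exact pair_prefix_toList_pcomm_smul hij (ha p) (hb p) hw
  · rintro p _ ⟨w, hw, rfl⟩
    rw [Pi.inv_apply, pcomm_inv]
    exact pair_prefix_toList_pcomm_smul hij.symm (hb p) (ha p) hw

end Monoid.CoprodI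

namespace Subgroup

theorem commutator_le_of_closure_pair_eq_top {G : Type*} [Group G] {x y : G}
    (hxy : closure {x, y} = ⊤) {N : Subgroup G} [N.Normal] (h : ⁅x, y⁆ ∈ N) :
    _root_.commutator G ≤ N := by
  rw [← Normal.quotient_commutative_iff_commutator_le]
  let π := QuotientGroup.mk' N
  have hcomm : ∀ u ∈ ({π x, π y} : Set (G ⧸ N)), ∀ v ∈ ({π x, π y} : Set (G ⧸ N)),
      u * v = v * u := by
    have hxy' : π x * π y = π y * π x := by
      rw [← commutatorElement_eq_one_iff_mul_comm, ← map_commutatorElement]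
      exact (QuotientGroup.eq_one_iff _).2 h
    rintro u (rfl | rfl) v (rfl | rfl) <;> simp [hxy']
  have htop : closure {π x, π y} = ⊤ := by
    rw [← Set.image_pair, ← MonoidHom.map_closure, hxy, ← MonoidHom.range_eq_map,
      MonoidHom.range_eq_top.2 (QuotientGroup.mk'_surjective N)]
  have hle := closure_le_centralizer_centralizer ({π x, π y} : Set (G ⧸ N))
  rw [htop] at hle
  exact ⟨⟨fun u v => Set.centralizer_centralizer_comm_of_comm hcomm u (hle (mem_top u)) v
    (hle (mem_top v))⟩⟩

section TwoGenerated

variable {G : Type*} [Group G] (x y : G)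

lemma zpow_left_mul_pcomm_mul_inv (m n k : ℤ) :
    x ^ m * pcomm (x ^ n) (y ^ k) * (x ^ m)⁻¹ =
      pcomm (x ^ (n - m)) (y ^ k) * (pcomm (x ^ (-m)) (y ^ k))⁻¹ := by
  simp only [pcomm]; group

lemma zpow_right_mul_pcomm_mul_inv (m n k : ℤ) :
    y ^ m * pcomm (x ^ n) (y ^ k) * (y ^ m)⁻¹ =
      (pcomm (x ^ n) (y ^ (-m)))⁻¹ * pcomm (x ^ n) (y ^ (k - m)) := by
  simp only [pcomm]; group

theorem closure_range_pcomm_zpow_normal (hxy : closure {x, y} = ⊤) :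
    (closure (Set.range fun nk : ℤ × ℤ => pcomm (x ^ nk.1) (y ^ nk.2))).Normal := by
  set H := closure (Set.range fun nk : ℤ × ℤ => pcomm (x ^ nk.1) (y ^ nk.2))
  have mem (n k : ℤ) : pcomm (x ^ n) (y ^ k) ∈ H := subset_closure ⟨(n, k), rfl⟩
  rw [← normalizer_eq_top_iff, eq_top_iff, ← hxy, closure_le]
  have hx : zpowers x ≤ normalizer (H : Set G) := by
    refine le_normalizer_closure_iff.2 ?_
    rintro _ ⟨m, rfl⟩ _ ⟨⟨n, k⟩, rfl⟩
    rw [zpow_left_mul_pcomm_mul_inv]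
    exact mul_mem (mem _ _) (inv_mem (mem _ _))
  have hy : zpowers y ≤ normalizer (H : Set G) := by
    refine le_normalizer_closure_iff.2 ?_
    rintro _ ⟨m, rfl⟩ _ ⟨⟨n, k⟩, rfl⟩
    rw [zpow_right_mul_pcomm_mul_inv]
    exact mul_mem (inv_mem (mem _ _)) (mem _ _)
  rintro _ (rfl | rfl)
  exacts [hx (mem_zpowers _), hy (mem_zpowers _)]

theorem closure_range_pcomm_zpow_eq_commutator (hxy : closure {x, y} = ⊤) :
    closure (Set.range fun nk : ℤ × ℤ => pcomm (x ^ nk.1) (y ^ nk.2)) = _root_.commutator G := by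
  refine le_antisymm ((closure_le _).2 ?_) ?_
  · rintro _ ⟨⟨n, k⟩, rfl⟩
    simp only [SetLike.mem_coe, pcomm_eq_commutatorElement]
    exact commutator_mem_commutator (mem_top _) (mem_top _)
  · have := closure_range_pcomm_zpow_normal x y hxy
    refine commutator_le_of_closure_pair_eq_top hxy (subset_closure ⟨(-1, -1), ?_⟩)
    simp [pcomm_eq_commutatorElement]

lemma closure_range_pcomm_zpow_ne_zero_eq :
    closure (Set.range fun p : {p : ℤ × ℤ // p.1 ≠ 0 ∧ p.2 ≠ 0} =>
        pcomm (x ^ p.1.1) (y ^ p.1.2)) =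
      closure (Set.range fun nk : ℤ × ℤ => pcomm (x ^ nk.1) (y ^ nk.2)) := by
  refine le_antisymm (closure_mono fun _ ⟨p, hp⟩ => ⟨p.1, hp⟩) ((closure_le _).2 ?_)
  rintro _ ⟨⟨n, k⟩, rfl⟩
  by_cases h : n ≠ 0 ∧ k ≠ 0
  · exact subset_closure ⟨⟨(n, k), h⟩, rfl⟩
  · obtain rfl | rfl := not_and_or.1 h |>.imp not_not.1 not_not.1 <;> simp [pcomm]

end TwoGenerated

end Subgroup

namespace FreeGroup

lemma zpow_of_injective {α : Type*} (a : α) : Function.Injective fun n : ℤ => of a ^ n :=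
  injective_zpow_iff_not_isOfFinOrder.2 (not_isOfFinOrder_of_isMulTorsionFree (of_ne_one a))

lemma closure_of_one_of_zero : Subgroup.closure {of (1 : Fin 2), of 0} = ⊤ := by
  rw [← closure_range_of]
  congr 1
  ext
  simp [Fin.exists_fin_two, or_comm, eq_comm]

end FreeGroup

lemma freeGroupEquivCoprodI_comp_lift_basisFamilyF2 :
    (freeGroupEquivCoprodI (ι := Fin 2)).toMonoidHom.comp (FreeGroup.lift basisFamilyF2) =
      FreeGroup.lift fun p =>
        pcomm (Monoid.CoprodI.of (M := fun _ => FreeGroup Unit) (i := 1) (.of () ^ p.1.1))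
          (Monoid.CoprodI.of (i := 0) (.of () ^ p.1.2)) := by
  ext p
  simp [basisFamilyF2, pcomm]

instance : Nontrivial {p : ℤ × ℤ // p.1 ≠ 0 ∧ p.2 ≠ 0} :=
  ⟨⟨⟨(1, 1), by decide⟩, ⟨(2, 1), by decide⟩, by simp⟩⟩

/-- The commutator subgroup of the free group `F₂ = F(g₁, g₂)` is freely generated by the
commutators `(g₂ⁿ, g₁ᵏ) = g₂⁻ⁿ g₁⁻ᵏ g₂ⁿ g₁ᵏ` with `n, k` nonzero integers: the homomorphism
from the free group on this index set to `F₂`, sending each index to the corresponding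
commutator, is injective and has image the commutator subgroup. -/
theorem commutator_subgroup_F2_free_basis :
    Function.Injective (FreeGroup.lift basisFamilyF2) ∧
      (FreeGroup.lift basisFamilyF2).range = commutator (FreeGroup (Fin 2)) := by
  constructor
  · have ht := FreeGroup.zpow_of_injective ()
    have ht_ne_one (n : ℤ) (hn : n ≠ 0) : FreeGroup.of () ^ n ≠ 1 :=
      ht.ne_iff' (zpow_zero _) |>.2 hn
    refine Function.Injective.of_comp (f := freeGroupEquivCoprodI) ?_
    change Function.Injective (freeGroupEquivCoprodI.toMonoidHom.comp _)
    rw [freeGroupEquivCoprodI_comp_lift_basisFamilyF2]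
    exact Monoid.CoprodI.injective_lift_pcomm_of (by decide) _ _
      (fun p => ht_ne_one _ p.2.1) (fun p => ht_ne_one _ p.2.2)
      fun p q h => Subtype.ext (Prod.ext (ht (congrArg Prod.fst h)) (ht (congrArg Prod.snd h)))
  · rw [FreeGroup.range_lift_eq_closure, ← Subgroup.closure_range_pcomm_zpow_eq_commutator _ _
      FreeGroup.closure_of_one_of_zero, ← Subgroup.closure_range_pcomm_zpow_ne_zero_eq]
    rfl
end

section
/- The commutator subgroup of the free group F_3 = F(g_1, g_2, g_3) on three generators is a free group, freely generated by the family of iterated commutators (g_3^{n_1}, g_1^{n_2}), (g_3^{n_1}, g_2^{n_2}), (g_2^{n_1}, g_1^{n_2}), (g_1^{n_1}, (g_3^{n_2}, g_2^{n_3})), (g_2^{n_1}, (g_3^{n_2}, g_1^{n_3})), where all exponents n_k range over the nonzero integers. -/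
/-- Nonzero integers. -/
def NZInt : Type := {n : ℤ // n ≠ 0}

/-- The index set for the basic commutators in `F₃`: three families of commutators of weight
two, indexed by pairs of nonzero integers, and two families of iterated commutators of weight
three, indexed by triples of nonzero integers. -/
def IndexF3 : Type := (Fin 3 × NZInt × NZInt) ⊕ (Fin 2 × NZInt × NZInt × NZInt)

/-- The family of iterated commutators
`(g₃^{n₁}, g₁^{n₂})`, `(g₃^{n₁}, g₂^{n₂})`, `(g₂^{n₁}, g₁^{n₂})`,
`(g₁^{n₁}, (g₃^{n₂}, g₂^{n₃}))`, `(g₂^{n₁}, (g₃^{n₂}, g₁^{n₃}))` in the free group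
`F₃ = F(g₁, g₂, g₃)` (whose generators are indexed by `0, 1, 2`). -/
def basisFamilyF3 : IndexF3 → FreeGroup (Fin 3) := fun x =>
  match x with
  | .inl (v, n₁, n₂) =>
      ![pcomm (FreeGroup.of (2 : Fin 3) ^ n₁.1) (FreeGroup.of (0 : Fin 3) ^ n₂.1),
        pcomm (FreeGroup.of (2 : Fin 3) ^ n₁.1) (FreeGroup.of (1 : Fin 3) ^ n₂.1),
        pcomm (FreeGroup.of (1 : Fin 3) ^ n₁.1) (FreeGroup.of (0 : Fin 3) ^ n₂.1)] v
  | .inr (v, n₁, n₂, n₃) =>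
      ![pcomm (FreeGroup.of (0 : Fin 3) ^ n₁.1)
          (pcomm (FreeGroup.of (2 : Fin 3) ^ n₂.1) (FreeGroup.of (1 : Fin 3) ^ n₃.1)),
        pcomm (FreeGroup.of (1 : Fin 3) ^ n₁.1)
          (pcomm (FreeGroup.of (2 : Fin 3) ^ n₂.1) (FreeGroup.of (0 : Fin 3) ^ n₃.1))] v

namespace ReidemeisterSchreier

open FreeGroup (of lift)

variable {ι Q D : Type*} [Group Q] [Group D]

/-- The left component of `wreathLift π s g` at `q` is the rewrite of `g` read from the coset
indexed by `q`, where `s i q` is the rewrite of the generator `i` there. -/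
def wreathLift (π : FreeGroup ι →* Q) (s : ι → Q → D) : FreeGroup ι →* D ≀ᵣ Q :=
  lift fun i => ⟨s i, π (of i)⟩

variable (π : FreeGroup ι →* Q)

section

variable (s : ι → Q → D)

@[simp]
theorem wreathLift_right (g : FreeGroup ι) : (wreathLift π s g).right = π g :=
  DFunLike.congr_fun (FreeGroup.ext_hom (f := RegularWreathProduct.rightHom.comp (wreathLift π s))
    (g := π) fun _ => by simp [wreathLift]) g

@[simp]
theorem wreathLift_of_left (i : ι) : (wreathLift π s (of i)).left = s i := by
  simp [wreathLift]

theorem wreathLift_left_mul (g h : FreeGroup ι) (x : Q) :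
    (wreathLift π s (g * h)).left x =
      (wreathLift π s g).left x * (wreathLift π s h).left ((π g)⁻¹ * x) := by
  rw [map_mul, RegularWreathProduct.mul_left, wreathLift_right]
  rfl

theorem wreathLift_left_inv (g : FreeGroup ι) (x : Q) :
    (wreathLift π s g⁻¹).left x = ((wreathLift π s g).left (π g * x))⁻¹ := by
  rw [map_inv, RegularWreathProduct.inv_left, wreathLift_right]
  rfl

def telescoping (e : ι → Q → D) : ι → Q → D :=
  fun i x => e i x * (e i ((π (of i))⁻¹ * x))⁻¹

theorem wreathLift_telescoping_left_zpow_of (e : ι → Q → D) (i : ι) (n : ℤ) (x : Q) :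
    (wreathLift π (telescoping π e) (of i ^ n)).left x =
      e i x * (e i ((π (of i))⁻¹ ^ n * x))⁻¹ := by
  induction n using Int.induction_on generalizing x with
  | zero => simp
  | succ n ih =>
    rw [zpow_add_one, wreathLift_left_mul, ih, wreathLift_of_left, telescoping, map_zpow,
      ← inv_zpow]
    group
  | pred n ih =>
    rw [zpow_sub_one, wreathLift_left_mul, ih, wreathLift_left_inv, wreathLift_of_left,
      telescoping, map_zpow, ← inv_zpow]
    group

theorem map_wreathLift_left (L : D →* FreeGroup ι) (rep : Q → FreeGroup ι)
    (hs : ∀ i x, L (s i x) = rep x * of i * (rep ((π (of i))⁻¹ * x))⁻¹)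
    (g : FreeGroup ι) (x : Q) :
    L ((wreathLift π s g).left x) = rep x * g * (rep ((π g)⁻¹ * x))⁻¹ := by
  induction g using FreeGroup.induction_on generalizing x with
  | C1 => simp
  | of i => rw [wreathLift_of_left, hs]
  | inv_of i ih =>
    rw [wreathLift_left_inv, map_inv, ih, map_inv, inv_inv, inv_mul_cancel_left]
    group
  | mul g h ihg ihh =>
    rw [wreathLift_left_mul, map_mul, ihg, ihh, map_mul, mul_inv_rev, mul_assoc (π h)⁻¹]
    group

def rewriting : π.ker →* D where
  toFun g := (wreathLift π s g).left 1
  map_one' := by simp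
  map_mul' g h := by
    rw [Subgroup.coe_mul, wreathLift_left_mul, MonoidHom.mem_ker.mp g.2, inv_one, one_mul]

theorem map_rewriting (L : D →* FreeGroup ι) (rep : Q → FreeGroup ι) (hrep : rep 1 = 1)
    (hs : ∀ i x, L (s i x) = rep x * of i * (rep ((π (of i))⁻¹ * x))⁻¹) (g : π.ker) :
    L (rewriting π s g) = g := by
  simp [rewriting, map_wreathLift_left π s L rep hs, MonoidHom.mem_ker.mp g.2, hrep]

end

theorem injective_lift_and_range_eq_ker {κ : Type*} (b : κ → FreeGroup ι)
    (hb : ∀ k, b k ∈ π.ker) (s : ι → Q → FreeGroup κ) (rep : Q → FreeGroup ι) (hrep : rep 1 = 1)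
    (hs : ∀ i x, lift b (s i x) = rep x * of i * (rep ((π (of i))⁻¹ * x))⁻¹)
    (hsb : ∀ k, (wreathLift π s (b k)).left 1 = of k) :
    Function.Injective (lift b) ∧ (lift b).range = π.ker := by
  let b' : κ → π.ker := fun k => ⟨b k, hb k⟩
  have hlift : lift b = π.ker.subtype.comp (lift b') := by ext; simp [b']
  have hleft : (rewriting π s).comp (lift b') = MonoidHom.id _ := by
    ext k
    simpa [rewriting, b'] using hsb k
  refine ⟨?_, le_antisymm ?_ fun g hg => ⟨_, map_rewriting π s _ rep hrep hs ⟨g, hg⟩⟩⟩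
  · rw [hlift]
    exact π.ker.subtype_injective.comp
      (Function.LeftInverse.injective (g := rewriting π s) (DFunLike.congr_fun hleft))
  · rw [FreeGroup.range_lift_eq_closure, Subgroup.closure_le]
    rintro _ ⟨k, rfl⟩
    exact hb k

end ReidemeisterSchreier

open scoped commutatorElement in
theorem pcomm_mem_commutator {G : Type*} [Group G] (g h : G) : pcomm g h ∈ commutator G := by
  have : pcomm g h = ⁅g⁻¹, h⁻¹⁆ := by simp [commutatorElement_def, pcomm]
  rw [this, commutator_def]
  exact Subgroup.commutator_mem_commutator (Subgroup.mem_top _) (Subgroup.mem_top _)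

namespace CommutatorF3

open FreeGroup (of lift)
open ReidemeisterSchreier Multiplicative

theorem basisFamilyF3_mem_commutator (k : IndexF3) :
    basisFamilyF3 k ∈ commutator (FreeGroup (Fin 3)) := by
  rcases k with ⟨v, m, n⟩ | ⟨v, m, n, p⟩ <;> fin_cases v <;> exact pcomm_mem_commutator _ _

def exponentSums : FreeGroup (Fin 3) →* Multiplicative (ℤ × ℤ × ℤ) :=
  lift ![ofAdd (1, 0, 0), ofAdd (0, 1, 0), ofAdd (0, 0, 1)]

def transversal (x : Multiplicative (ℤ × ℤ × ℤ)) : FreeGroup (Fin 3) :=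
  of 0 ^ (-x.toAdd.1) * of 1 ^ (-x.toAdd.2.1) * of 2 ^ (-x.toAdd.2.2)

theorem transversal_one : transversal 1 = 1 := by
  simp [transversal]

def pairComm (v : Fin 3) (m n : ℤ) : FreeGroup (Fin 3) :=
  ![pcomm (of 2 ^ m) (of 0 ^ n), pcomm (of 2 ^ m) (of 1 ^ n), pcomm (of 1 ^ m) (of 0 ^ n)] v

def tripleComm (v : Fin 2) (m n p : ℤ) : FreeGroup (Fin 3) :=
  ![pcomm (of 0 ^ m) (pcomm (of 2 ^ n) (of 1 ^ p)),
    pcomm (of 1 ^ m) (pcomm (of 2 ^ n) (of 0 ^ p))] v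

def pairLetter (v : Fin 3) (m n : ℤ) : FreeGroup IndexF3 :=
  if h : m ≠ 0 ∧ n ≠ 0 then of (.inl (v, ⟨m, h.1⟩, ⟨n, h.2⟩) : IndexF3) else 1

def tripleLetter (v : Fin 2) (m n p : ℤ) : FreeGroup IndexF3 :=
  if h : m ≠ 0 ∧ n ≠ 0 ∧ p ≠ 0 then of (.inr (v, ⟨m, h.1⟩, ⟨n, h.2.1⟩, ⟨p, h.2.2⟩) : IndexF3)
  else 1

@[simp] theorem pairLetter_zero_left (v : Fin 3) (n : ℤ) : pairLetter v 0 n = 1 := by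
  simp [pairLetter]
@[simp] theorem pairLetter_zero_right (v : Fin 3) (m : ℤ) : pairLetter v m 0 = 1 := by
  simp [pairLetter]
@[simp] theorem tripleLetter_zero_fst (v : Fin 2) (n p : ℤ) : tripleLetter v 0 n p = 1 := by
  simp [tripleLetter]
@[simp] theorem tripleLetter_zero_snd (v : Fin 2) (m p : ℤ) : tripleLetter v m 0 p = 1 := by
  simp [tripleLetter]
@[simp] theorem tripleLetter_zero_thd (v : Fin 2) (m n : ℤ) : tripleLetter v m n 0 = 1 := by
  simp [tripleLetter]

theorem pairLetter_val (v : Fin 3) (m n : NZInt) : pairLetter v m.1 n.1 = of (.inl (v, m, n)) :=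
  dif_pos ⟨m.2, n.2⟩

theorem tripleLetter_val (v : Fin 2) (m n p : NZInt) :
    tripleLetter v m.1 n.1 p.1 = of (.inr (v, m, n, p)) :=
  dif_pos ⟨m.2, n.2, p.2⟩

theorem lift_pairLetter (v : Fin 3) (m n : ℤ) :
    lift basisFamilyF3 (pairLetter v m n) = pairComm v m n := by
  by_cases h : m ≠ 0 ∧ n ≠ 0
  · rw [pairLetter, dif_pos h]
    exact FreeGroup.lift_apply_of
  · obtain rfl | rfl : m = 0 ∨ n = 0 := by tauto
    all_goals fin_cases v <;> simp [pairComm, pcomm]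

theorem lift_tripleLetter (v : Fin 2) (m n p : ℤ) :
    lift basisFamilyF3 (tripleLetter v m n p) = tripleComm v m n p := by
  by_cases h : m ≠ 0 ∧ n ≠ 0 ∧ p ≠ 0
  · rw [tripleLetter, dif_pos h]
    exact FreeGroup.lift_apply_of
  · obtain rfl | rfl | rfl : m = 0 ∨ n = 0 ∨ p = 0 := by tauto
    all_goals fin_cases v <;> simp [tripleComm, pcomm] <;> group

def potential₁ (v : ℤ × ℤ × ℤ) : FreeGroup IndexF3 :=
  (pairLetter 2 v.2.1 v.1)⁻¹ * tripleLetter 1 v.2.1 v.2.2 v.1 * (pairLetter 0 v.2.2 v.1)⁻¹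

def potential₂ (v : ℤ × ℤ × ℤ) : FreeGroup IndexF3 :=
  tripleLetter 0 v.1 v.2.2 v.2.1 * (pairLetter 1 v.2.2 v.2.1)⁻¹

theorem lift_potential₁ (v : ℤ × ℤ × ℤ) :
    lift basisFamilyF3 (potential₁ v) =
      of 0 ^ (-v.1) * of 1 ^ (-v.2.1) * of 2 ^ (-v.2.2) * of 0 ^ v.1 * of 2 ^ v.2.2 * of 1 ^ v.2.1 := by
  simp only [potential₁, map_mul, map_inv, lift_pairLetter, lift_tripleLetter]
  simp [pairComm, tripleComm, pcomm]
  group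

theorem lift_potential₂ (v : ℤ × ℤ × ℤ) :
    lift basisFamilyF3 (potential₂ v) =
      of 0 ^ (-v.1) * of 1 ^ (-v.2.1) * of 2 ^ (-v.2.2) * of 1 ^ v.2.1 * of 2 ^ v.2.2 * of 0 ^ v.1 := by
  simp only [potential₂, map_mul, map_inv, lift_pairLetter, lift_tripleLetter]
  simp [pairComm, tripleComm, pcomm]
  group

/-- The Schreier generator of a `gᵢ`-edge telescopes along the `gᵢ`-direction; for `g₃`, the last
letter of the transversal, it is trivial. -/
def potential : Fin 3 → Multiplicative (ℤ × ℤ × ℤ) → FreeGroup IndexF3 :=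
  ![fun x => potential₁ x.toAdd, fun x => potential₂ x.toAdd, 1]

local notation "ρ" => wreathLift exponentSums (telescoping exponentSums potential)

theorem lift_telescoping_potential (i : Fin 3) (x : Multiplicative (ℤ × ℤ × ℤ)) :
    lift basisFamilyF3 (telescoping exponentSums potential i x) =
      transversal x * of i * (transversal ((exponentSums (of i))⁻¹ * x))⁻¹ := by
  fin_cases i <;>
    simp [telescoping, potential, lift_potential₁, lift_potential₂, transversal, exponentSums] <;>
    group

theorem wreathLift_pairComm (v : Fin 3) (m n : ℤ) :
    (ρ (pairComm v m n)).left 1 = pairLetter v m n := by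
  fin_cases v <;>
    simp only [pairComm, Fin.zero_eta, Fin.mk_one, Fin.reduceFinMk, Matrix.cons_val, pcomm,
      wreathLift_left_mul, wreathLift_left_inv, wreathLift_telescoping_left_zpow_of] <;>
    simp [potential, potential₁, potential₂, exponentSums]

theorem wreathLift_tripleComm (v : Fin 2) (m n p : ℤ) :
    (ρ (tripleComm v m n p)).left 1 = tripleLetter v m n p := by
  fin_cases v <;>
    simp only [tripleComm, Fin.zero_eta, Fin.mk_one, Matrix.cons_val, pcomm,
      wreathLift_left_mul, wreathLift_left_inv, wreathLift_telescoping_left_zpow_of] <;>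
    simp [potential, potential₁, potential₂, exponentSums, mul_assoc]

theorem wreathLift_basisFamilyF3 (k : IndexF3) :
    (ρ (basisFamilyF3 k)).left 1 = of k := by
  rcases k with ⟨v, m, n⟩ | ⟨v, m, n, p⟩
  · exact (wreathLift_pairComm v m.1 n.1).trans (pairLetter_val v m n)
  · exact (wreathLift_tripleComm v m.1 n.1 p.1).trans (tripleLetter_val v m n p)

end CommutatorF3

open CommutatorF3 ReidemeisterSchreier

/-- The commutator subgroup of the free group `F₃ = F(g₁, g₂, g₃)` is freely generated by the
iterated commutators `(g₃^{n₁}, g₁^{n₂})`, `(g₃^{n₁}, g₂^{n₂})`, `(g₂^{n₁}, g₁^{n₂})`,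
`(g₁^{n₁}, (g₃^{n₂}, g₂^{n₃}))`, `(g₂^{n₁}, (g₃^{n₂}, g₁^{n₃}))` with all exponents nonzero:
the homomorphism from the free group on this index set to `F₃`, sending each index to the
corresponding commutator, is injective and has image the commutator subgroup. -/
theorem commutator_subgroup_F3_free_basis :
    Function.Injective (FreeGroup.lift basisFamilyF3) ∧
      (FreeGroup.lift basisFamilyF3).range = commutator (FreeGroup (Fin 3)) := by
  have commutator_le_ker : commutator (FreeGroup (Fin 3)) ≤ exponentSums.ker :=
    Abelianization.commutator_subset_ker exponentSums
  obtain ⟨hinj, hrange⟩ := injective_lift_and_range_eq_ker exponentSums basisFamilyF3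
    (fun k => commutator_le_ker (basisFamilyF3_mem_commutator k))
    (telescoping exponentSums potential) transversal transversal_one lift_telescoping_potential
    wreathLift_basisFamilyF3
  refine ⟨hinj, hrange.trans (le_antisymm ?_ commutator_le_ker)⟩
  rw [← hrange, FreeGroup.range_lift_eq_closure, Subgroup.closure_le]
  rintro _ ⟨k, rfl⟩
  exact basisFamilyF3_mem_commutator k
end

section
/- For every integer m ≥ 2 and every natural number s, the following identity holds in ℤ: ∑_{i=2}^{m} C(m, i)·(i − 1)·s^i = s²·(s + 1)^{m−2} + (m − 2)·(s + 1)^{m−1}·s − s·∑_{i=0}^{m−3}(s + 1)^i, where C(m, i) denotes the binomial coefficient and the last sum is empty (equal to 0) when m = 2. -/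
/-!
Evaluating `∑ C(m,i) x^i = (x+1)^m` and its `x d/dx`-derivative `∑ C(m,i) i x^i = m x (x+1)^{m-1}`
gives the closed form `m x (x+1)^{m-1} - (x+1)^m + 1` of the left-hand side (the `+1` undoes the
terms `i = 0, 1`), while `s ∑_{i<m-2} (s+1)^i = (s+1)^{m-2} - 1`; both sides then
reduce to `(s-1)(s+1)^{m-1} + (m-2)s(s+1)^{m-1} + 1`.
-/

open Finset

section CommSemiring

variable {R : Type*} [CommSemiring R]

theorem sum_range_choose_mul_pow (x : R) (n : ℕ) :
    ∑ i ∈ range (n + 1), (n.choose i : R) * x ^ i = (x + 1) ^ n := by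
  rw [add_pow]
  exact sum_congr rfl fun i _ => by simp [mul_comm]

theorem sum_range_choose_mul_mul_pow (x : R) (n : ℕ) :
    ∑ i ∈ range (n + 2), ((n + 1).choose i : R) * i * x ^ i = (n + 1) * x * (x + 1) ^ n := by
  have absorb (i : ℕ) : ((n + 1).choose (i + 1) : R) * (i + 1 : ℕ) * x ^ (i + 1) =
      (n + 1) * x * ((n.choose i : R) * x ^ i) := by
    calc ((n + 1).choose (i + 1) : R) * (i + 1 : ℕ) * x ^ (i + 1)
        = ((n + 1 : ℕ) : R) * n.choose i * x ^ (i + 1) := by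
          rw [← Nat.cast_mul, ← Nat.cast_mul, Nat.add_one_mul_choose_eq]
      _ = (n + 1) * x * ((n.choose i : R) * x ^ i) := by push_cast; ring
  rw [sum_range_succ', sum_congr rfl fun i _ => absorb i, ← mul_sum, sum_range_choose_mul_pow]
  simp

end CommSemiring

theorem sum_Icc_two_choose_mul_sub_one_mul_pow {R : Type*} [CommRing R] (x : R) (n : ℕ) :
    ∑ i ∈ Icc 2 (n + 2), ((n + 2).choose i : R) * ((i : R) - 1) * x ^ i =
      (n + 2) * x * (x + 1) ^ (n + 1) - (x + 1) ^ (n + 2) + 1 := by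
  have full : ∑ i ∈ range (n + 3), ((n + 2).choose i : R) * ((i : R) - 1) * x ^ i =
      (n + 2) * x * (x + 1) ^ (n + 1) - (x + 1) ^ (n + 2) := by
    simp only [mul_sub, sub_mul, mul_one, sum_sub_distrib]
    rw [sum_range_choose_mul_pow, sum_range_choose_mul_mul_pow]
    push_cast
    ring
  rw [← Ico_add_one_right_eq_Icc]
  rw [← sum_range_add_sum_Ico _ (by omega : 2 ≤ n + 3)] at full
  rw [sum_range_succ, sum_range_one, Nat.choose_zero_right, Nat.choose_one_right] at full
  push_cast at full
  linear_combination full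

/-- The identity `J_m^{(s)} = W_m^{(s)}` of the paper:
`∑_{i=2}^{m} C(m,i)(i-1)s^i = s²(s+1)^{m-2} + (m-2)(s+1)^{m-1}s - s ∑_{i=0}^{m-3}(s+1)^i`. -/
theorem J_eq_W (m : ℕ) (hm : 2 ≤ m) (s : ℕ) :
    ∑ i ∈ Finset.Icc 2 m, (m.choose i : ℤ) * ((i : ℤ) - 1) * (s : ℤ) ^ i =
      (s : ℤ) ^ 2 * ((s : ℤ) + 1) ^ (m - 2) +
        ((m : ℤ) - 2) * ((s : ℤ) + 1) ^ (m - 1) * (s : ℤ) -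
        (s : ℤ) * ∑ i ∈ Finset.range (m - 2), ((s : ℤ) + 1) ^ i := by
  obtain ⟨n, rfl⟩ : ∃ n, m = n + 2 := ⟨m - 2, by omega⟩
  rw [sum_Icc_two_choose_mul_sub_one_mul_pow, Nat.add_sub_cancel, show n + 2 - 1 = n + 1 by omega]
  push_cast
  linear_combination geom_sum_mul_add (s : ℤ) n
end

section
/- For all integers m and k with 2 ≤ k ≤ m, the following identity holds in ℤ: C(m−2, k−2) + (m−2)·C(m−1, k−1) − C(m−2, k) = (k−1)·C(m, k), where C(a, b) denotes the binomial coefficient. -/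
/-- The binomial identity
`C(m-2, k-2) + (m-2)·C(m-1, k-1) - C(m-2, k) = (k-1)·C(m, k)` for `2 ≤ k ≤ m`. -/
theorem binomial_identity (m k : ℕ) (hk : 2 ≤ k) (hkm : k ≤ m) :
    ((m - 2).choose (k - 2) : ℤ) + ((m : ℤ) - 2) * ((m - 1).choose (k - 1) : ℤ) -
      ((m - 2).choose k : ℤ) = ((k : ℤ) - 1) * (m.choose k : ℤ) := by
  obtain ⟨b, rfl⟩ := Nat.exists_eq_add_of_le hk
  obtain ⟨a, rfl⟩ := Nat.exists_eq_add_of_le hkm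
  have e1 : 2 + b - 2 = b := by omega
  have e2 : 2 + b + a - 2 = b + a := by omega
  have e3 : 2 + b + a - 1 = b + a + 1 := by omega
  have e4 : 2 + b - 1 = b + 1 := by omega
  have e5 : 2 + b + a = (b + a + 1) + 1 := by omega
  have e6 : 2 + b = b + 1 + 1 := by omega
  rw [e1, e2, e3, e4, e5, e6]
  have h1 : (b + a + 2) * (b + a + 1).choose (b + 1) =
      (b + a + 2).choose (b + 2) * (b + 2) := by
    have := Nat.add_one_mul_choose_eq (b + a + 1) (b + 1)
    simpa [Nat.succ_eq_add_one, show b+a+1+1 = b+a+2 by omega, show b+1+1 = b+2 by omega] using this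
  have h2 : (b + a + 1 + 1).choose (b + 1 + 1) =
      (b + a + 1).choose (b + 1) + (b + a + 1).choose (b + 2) :=
    Nat.choose_succ_succ _ _
  have h3 : (b + a + 1).choose (b + 2) = (b + a).choose (b + 1) + (b + a).choose (b + 2) :=
    Nat.choose_succ_succ _ _
  have h4 : (b + a + 1).choose (b + 1) = (b + a).choose b + (b + a).choose (b + 1) :=
    Nat.choose_succ_succ _ _
  have h1' : ((b + a + 2 : ℕ) : ℤ) * ((b + a + 1).choose (b + 1) : ℤ) =
      ((b + a + 2).choose (b + 2) : ℤ) * ((b + 2 : ℕ) : ℤ) := by exact_mod_cast congrArg Nat.cast h1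
  have h2' : (((b + a + 1 + 1).choose (b + 1 + 1) : ℕ) : ℤ) =
      ((b + a + 1).choose (b + 1) : ℤ) + ((b + a + 1).choose (b + 2) : ℤ) := by
    exact_mod_cast congrArg Nat.cast h2
  have h3' : (((b + a + 1).choose (b + 2) : ℕ) : ℤ) =
      ((b + a).choose (b + 1) : ℤ) + ((b + a).choose (b + 2) : ℤ) := by
    exact_mod_cast congrArg Nat.cast h3
  have h4' : (((b + a + 1).choose (b + 1) : ℕ) : ℤ) =
      ((b + a).choose b : ℤ) + ((b + a).choose (b + 1) : ℤ) := by
    exact_mod_cast congrArg Nat.cast h4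
  have e7 : (b + a + 1 + 1).choose (b + 1 + 1) = (b + a + 2).choose (b + 2) := by ring_nf
  rw [e7] at h2'
  push_cast
  push_cast at h1' h2' h3' h4'
  linarith
end
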